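/- In an acyclic flow network, every directed edge in the flow-oriented controllable edge set lies in the downstream (out-tree) of some supplier vertex; that is, the union over all suppliers i of the downstreams D_i equals the full set of flow-oriented controllable edges E⃗_cf. -/

import Mathlib

/-- `v` lies in the connected component of `G ∖ {i}` containing `j`
(the half-cluster `H_{ij}`). -/
def reachAvoid {V : Type*} (G : SimpleGraph V) (i j v : V) : Prop :=
  Relation.ReflTransGen (fun a b => G.Adj a b ∧ b ≠ i) j v

/-- The supplier indicator `β_{ij} = 1`: the half-cluster `H_{ij}` contains a supplier. -/
def hasSupplier {V : Type*} (G : SimpleGraph V) (Vs : Set V) (i j : V) : Prop :=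
  ∃ v ∈ Vs, reachAvoid G i j v

/-- `cfRel G Vs f a b`: `(a,b)` is a directed edge of `E⃗_cf`, i.e. `{a,b}` is an
edge with controllable flow (`β_{ab} = β_{ba} = 1`) oriented along its (positive) flow. -/
def cfRel {V : Type*} (G : SimpleGraph V) (Vs : Set V) (f : V → V → ℝ) (a b : V) : Prop :=
  G.Adj a b ∧ 0 < f a b ∧ hasSupplier G Vs a b ∧ hasSupplier G Vs b a

/-!
A consumer `a` with an outgoing controllable edge `a → b` has nonpositive supply, so by flow
conservation some flow enters it, say from `u`. Summing the balance equations over the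
half-cluster `H_{au}` shows that its total supply equals the flow `f u a > 0`, so `H_{au}`
contains a supplier; and `H_{ua} ⊇ H_{ab}` contains one because `a → b` is controllable. Hence
`u → a` is again a controllable edge. Following these edges backwards must stop at a supplier,
because in a tree a directed path of positive flow starting with `a → b` never leaves `H_{ab}`,
so `E⃗_cf` has no cycles.
-/

section HalfCluster

variable {V : Type*} {G : SimpleGraph V}

lemma ne_of_reachAvoid {a b v : V} (hba : b ≠ a) (h : reachAvoid G a b v) : v ≠ a := by
  induction h with
  | refl => exact hba
  | tail _ step _ => exact step.2

lemma exists_walk_of_reachAvoid {a b v : V} (hba : b ≠ a) (h : reachAvoid G a b v) :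
    ∃ p : G.Walk b v, a ∉ p.support := by
  induction h with
  | refl => exact ⟨.nil, by simpa using hba.symm⟩
  | tail _ step ih =>
    obtain ⟨p, hp⟩ := ih
    refine ⟨p.concat step.1, ?_⟩
    rw [SimpleGraph.Walk.support_concat, List.mem_append, List.mem_singleton, not_or]
    exact ⟨hp, step.2.symm⟩

lemma eq_of_reachAvoid_of_adj (hG : G.IsAcyclic) {a b v : V} (hab : G.Adj a b)
    (h : reachAvoid G a b v) (hav : G.Adj a v) : v = b := by
  classical
  obtain ⟨p, hp⟩ := exists_walk_of_reachAvoid hab.ne' h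
  have hpath : (SimpleGraph.Walk.cons hab p.bypass).IsPath :=
    (SimpleGraph.Walk.cons_isPath_iff _ _).2
      ⟨p.bypass_isPath, fun ha => hp (p.support_bypass_subset_support ha)⟩
  simpa using hG.eq_snd_of_adj_start hpath hav (SimpleGraph.Walk.end_mem_support _)

lemma reachAvoid_of_adj_of_ne (hG : G.IsAcyclic) {a b u v : V} (hab : G.Adj a b)
    (hau : G.Adj a u) (hub : u ≠ b) (h : reachAvoid G a b v) : reachAvoid G u a v := by
  induction h with
  | refl => exact .single ⟨hab, hub.symm⟩
  | @tail c d hc step ih =>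
    refine ih.tail ⟨step.1, ?_⟩
    rintro rfl
    exact hub (eq_of_reachAvoid_of_adj hG hab (hc.tail step) hau)

end HalfCluster

section Flow

variable {V : Type*} {f : V → V → ℝ}

lemma sum_sum_eq_zero_of_antisymm (hanti : ∀ a b, f b a = -f a b) (S : Finset V) :
    ∑ v ∈ S, ∑ w ∈ S, f v w = 0 := by
  have hswap : ∑ v ∈ S, ∑ w ∈ S, f v w = -∑ v ∈ S, ∑ w ∈ S, f v w :=
    calc ∑ v ∈ S, ∑ w ∈ S, f v w = ∑ w ∈ S, ∑ v ∈ S, f v w := Finset.sum_comm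
      _ = ∑ w ∈ S, ∑ v ∈ S, -f w v :=
        Finset.sum_congr rfl fun _ _ => Finset.sum_congr rfl fun _ _ => hanti _ _
      _ = -∑ v ∈ S, ∑ w ∈ S, f v w := by simp only [Finset.sum_neg_distrib]
  linarith

lemma sum_eq_sum_sum_compl [Fintype V] [DecidableEq V] {m : V → ℝ}
    (hanti : ∀ a b, f b a = -f a b) (hcons : ∀ v, ∑ u, f v u = m v) (S : Finset V) :
    ∑ v ∈ S, m v = ∑ v ∈ S, ∑ w ∈ Sᶜ, f v w := by
  simp only [← hcons, ← Finset.sum_add_sum_compl S, Finset.sum_add_distrib,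
    sum_sum_eq_zero_of_antisymm hanti, zero_add]

variable {G : SimpleGraph V}

lemma sum_reachAvoid_eq [Fintype V] [DecidableEq V] {m : V → ℝ} (hG : G.IsAcyclic)
    (hanti : ∀ a b, f b a = -f a b) (hsupp : ∀ a b, ¬ G.Adj a b → f a b = 0)
    (hcons : ∀ v, ∑ u, f v u = m v) {a u : V} [DecidablePred (reachAvoid G a u)]
    (hau : G.Adj a u) :
    ∑ v with reachAvoid G a u v, m v = f u a := by
  set S : Finset V := {v | reachAvoid G a u v}
  have hmem : ∀ v, v ∈ S ↔ reachAvoid G a u v := by simp [S]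
  have ha : a ∉ S := fun h => ne_of_reachAvoid hau.ne' ((hmem a).1 h) rfl
  -- the only edge leaving `S` is `{u, a}`
  have hout : ∀ v ∈ S, ∑ w ∈ Sᶜ, f v w = f v a := by
    intro v hv
    refine Finset.sum_eq_single_of_mem a (Finset.mem_compl.2 ha) fun w hw hwa => ?_
    refine hsupp v w fun hvw => Finset.mem_compl.1 hw ?_
    exact (hmem w).2 (((hmem v).1 hv).tail ⟨hvw, hwa⟩)
  rw [sum_eq_sum_sum_compl hanti hcons, Finset.sum_congr rfl hout]
  refine Finset.sum_eq_single_of_mem u ((hmem u).2 .refl) fun v hv hvu => hsupp v a fun hva => ?_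
  exact hvu (eq_of_reachAvoid_of_adj hG hau ((hmem v).1 hv) hva.symm)

lemma hasSupplier_of_flow_pos [Fintype V] {Vs : Set V} {m : V → ℝ} (hG : G.IsAcyclic)
    (hmc : ∀ v, v ∉ Vs → m v ≤ 0) (hanti : ∀ a b, f b a = -f a b)
    (hsupp : ∀ a b, ¬ G.Adj a b → f a b = 0) (hcons : ∀ v, ∑ u, f v u = m v)
    {a u : V} (hau : G.Adj a u) (hpos : 0 < f u a) : hasSupplier G Vs a u := by
  classical
  by_contra hno
  have hnonpos : ∀ v ∈ ({v | reachAvoid G a u v} : Finset V), m v ≤ 0 := fun v hv =>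
    hmc v fun hvs => hno ⟨v, hvs, (Finset.mem_filter.1 hv).2⟩
  linarith [Finset.sum_nonpos hnonpos, sum_reachAvoid_eq hG hanti hsupp hcons hau]

end Flow

section Controllable

variable {V : Type*} {G : SimpleGraph V} {Vs : Set V} {f : V → V → ℝ}

lemma exists_cfRel_to_of_cfRel_of_notMem [Fintype V] {m : V → ℝ} (hG : G.IsAcyclic)
    (hmc : ∀ v, v ∉ Vs → m v ≤ 0) (hanti : ∀ a b, f b a = -f a b)
    (hsupp : ∀ a b, ¬ G.Adj a b → f a b = 0) (hcons : ∀ v, ∑ u, f v u = m v)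
    {a b : V} (hab : cfRel G Vs f a b) (ha : a ∉ Vs) : ∃ u, cfRel G Vs f u a := by
  obtain ⟨hadj, hpos, ⟨v, hv, hbv⟩, -⟩ := hab
  obtain ⟨u, hu⟩ : ∃ u, f a u < 0 := by
    by_contra! hno
    have : f a b ≤ m a := hcons a ▸ Finset.single_le_sum (fun u _ => hno u) (Finset.mem_univ b)
    linarith [hmc a ha]
  have hua : 0 < f u a := by linarith [hanti a u]
  have hau : G.Adj a u := by_contra fun h => hu.ne (hsupp a u h)
  have hub : u ≠ b := by rintro rfl; linarith
  exact ⟨u, hau.symm, hua, ⟨v, hv, reachAvoid_of_adj_of_ne hG hadj hau hub hbv⟩,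
    hasSupplier_of_flow_pos hG hmc hanti hsupp hcons hau hua⟩

lemma reachAvoid_of_cfRel_of_reflTransGen (hG : G.IsAcyclic) (hanti : ∀ a b, f b a = -f a b)
    {a b c : V} (hab : cfRel G Vs f a b) (h : Relation.ReflTransGen (cfRel G Vs f) b c) :
    reachAvoid G a b c := by
  induction h with
  | refl => exact .refl
  | @tail x d _ hxd ih =>
    refine ih.tail ⟨hxd.1, ?_⟩
    rintro rfl
    -- the only neighbour of `a` in `H_{ab}` is `b`, and the flow cannot go both ways on `{a, b}`
    obtain rfl := eq_of_reachAvoid_of_adj hG hab.1 ih hxd.1.symm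
    linarith [hab.2.1, hxd.2.1, hanti x d]

lemma wellFounded_cfRel [Finite V] (hG : G.IsAcyclic) (hanti : ∀ a b, f b a = -f a b) :
    WellFounded (cfRel G Vs f) := by
  have : IsTrans V (Relation.TransGen (cfRel G Vs f)) := ⟨fun _ _ _ => .trans⟩
  have : Std.Irrefl (Relation.TransGen (cfRel G Vs f)) := ⟨fun a h => by
    obtain ⟨x, hax, hxa⟩ := Relation.TransGen.head'_iff.1 h
    exact ne_of_reachAvoid hax.1.ne' (reachAvoid_of_cfRel_of_reflTransGen hG hanti hax hxa) rfl⟩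
  exact Subrelation.wf Relation.TransGen.single (Finite.wellFounded_of_trans_of_irrefl _)

lemma exists_supplier_reflTransGen_cfRel [Fintype V] {m : V → ℝ} (hG : G.IsAcyclic)
    (hmc : ∀ v, v ∉ Vs → m v ≤ 0) (hanti : ∀ a b, f b a = -f a b)
    (hsupp : ∀ a b, ¬ G.Adj a b → f a b = 0) (hcons : ∀ v, ∑ u, f v u = m v)
    {a b : V} (hab : cfRel G Vs f a b) :
    ∃ i ∈ Vs, Relation.ReflTransGen (cfRel G Vs f) i a := by
  induction a using (wellFounded_cfRel (Vs := Vs) hG hanti).induction generalizing b with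
  | h a ih =>
  by_cases ha : a ∈ Vs
  · exact ⟨a, ha, .refl⟩
  obtain ⟨u, hua⟩ := exists_cfRel_to_of_cfRel_of_notMem hG hmc hanti hsupp hcons hab ha
  obtain ⟨i, hi, hiu⟩ := ih u hua hua
  exact ⟨i, hi, hiu.tail hua⟩

end Controllable

theorem stmt_4_general {V : Type*} [Fintype V] (G : SimpleGraph V) (hG : G.IsTree)
    (Vs : Set V) (m : V → ℝ)
    (hmc : ∀ v, v ∉ Vs → m v ≤ 0)
    (f : V → V → ℝ)
    (hanti : ∀ a b, f b a = - f a b)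
    (hsupp : ∀ a b, ¬ G.Adj a b → f a b = 0)
    (hcons : ∀ v, ∑ u, f v u = m v) :
    ∀ a b, cfRel G Vs f a b ↔
      ∃ i ∈ Vs, Relation.ReflTransGen (cfRel G Vs f) i a ∧ cfRel G Vs f a b := by
  intro a b
  refine ⟨fun hab => ?_, fun ⟨_, _, _, hab⟩ => hab⟩
  obtain ⟨i, hi, hia⟩ :=
    exists_supplier_reflTransGen_cfRel hG.isAcyclic hmc hanti hsupp hcons hab
  exact ⟨i, hi, hia, hab⟩

/-- in an acyclic flow network, the union over suppliers `i` of the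
downstreams `D_i` (out-trees of `i` in `(V_cf, E⃗_cf)`) equals `E⃗_cf`. -/
theorem stmt_4 {V : Type*} [Fintype V] (G : SimpleGraph V) (hG : G.IsTree)
    (Vs : Set V) (m : V → ℝ)
    (hms : ∀ v ∈ Vs, 0 < m v) (hmc : ∀ v, v ∉ Vs → m v ≤ 0)
    (hsum : ∑ v, m v = 0)
    (f : V → V → ℝ)
    (hanti : ∀ a b, f b a = - f a b)
    (hsupp : ∀ a b, ¬ G.Adj a b → f a b = 0)
    (hcons : ∀ v, ∑ u, f v u = m v) :
    ∀ a b, cfRel G Vs f a b ↔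
      ∃ i ∈ Vs, Relation.ReflTransGen (cfRel G Vs f) i a ∧ cfRel G Vs f a b :=
  stmt_4_general G hG Vs m hmc f hanti hsupp hcons
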